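/- The assignment h ↦ φ_a(h) defines a bijection from the Apéry set Ap(H, a_n) onto Mon(S/ini_<((x_n)+I(a))), the set of monomials of S not lying in ini_<((x_n)+I(a)) (which form a K-basis of S/ini_<((x_n)+I(a))). -/

import Mathlib

open MvPolynomial

/-- Sum of the exponents of a monomial (its total degree). -/
def degSum {m : ℕ} (u : Fin m →₀ ℕ) : ℕ := ∑ i, u i

/-- The reverse lexicographic order on monomials determined by a ranking permutation `σ`:
`σ i` is the rank of the variable `x i`; the variable of rank `0` is the greatest and the
variable of rank `m-1` is the smallest.  `u < v` iff `deg u < deg v`, or the degrees agree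
and at the differing position of largest rank (i.e. belonging to the smallest variable)
`u` has the larger exponent. -/
def RevLexLt {m : ℕ} (σ : Equiv.Perm (Fin m)) (u v : Fin m →₀ ℕ) : Prop :=
  degSum u < degSum v ∨
    (degSum u = degSum v ∧ ∃ i, v i < u i ∧ ∀ j, σ i < σ j → u j = v j)

/-- Extend a ranking permutation of `Fin m` to `Fin (m+1)` by letting the new
variable (of index `Fin.last m`, playing the role of `x₀`) have the largest rank,
i.e. be the smallest variable. -/
def extPerm {m : ℕ} (σ : Equiv.Perm (Fin m)) : Equiv.Perm (Fin (m + 1)) where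
  toFun := Fin.lastCases (Fin.last m) (fun i => (σ i).castSucc)
  invFun := Fin.lastCases (Fin.last m) (fun i => (σ.symm i).castSucc)
  left_inv := by
    intro x
    induction x using Fin.lastCases with
    | last => simp
    | cast i => simp
  right_inv := by
    intro x
    induction x using Fin.lastCases with
    | last => simp
    | cast i => simp

/-- `u` is the exponent vector of the leading monomial of `f` with respect to the
strict monomial order `lt`. -/
def IsLeadMon {K : Type} [Field K] {m : ℕ} (lt : (Fin m →₀ ℕ) → (Fin m →₀ ℕ) → Prop)
    (f : MvPolynomial (Fin m) K) (u : Fin m →₀ ℕ) : Prop :=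
  MvPolynomial.coeff u f ≠ 0 ∧ ∀ v, MvPolynomial.coeff v f ≠ 0 → v ≠ u → lt v u

/-- The initial ideal of `I` with respect to the monomial order `lt`: the ideal generated by
the leading monomials of the nonzero elements of `I`. -/
noncomputable def iniIdeal {K : Type} [Field K] {m : ℕ} (lt : (Fin m →₀ ℕ) → (Fin m →₀ ℕ) → Prop)
    (I : Ideal (MvPolynomial (Fin m) K)) : Ideal (MvPolynomial (Fin m) K) :=
  Ideal.span {p | ∃ f ∈ I, ∃ u, IsLeadMon lt f u ∧ p = MvPolynomial.monomial u (1 : K)}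

/-- `G` is a (finite) Gröbner basis of `I` w.r.t. `lt`. -/
def IsGB {K : Type} [Field K] {m : ℕ} (lt : (Fin m →₀ ℕ) → (Fin m →₀ ℕ) → Prop)
    (I : Ideal (MvPolynomial (Fin m) K)) (G : Set (MvPolynomial (Fin m) K)) : Prop :=
  G.Finite ∧ G ⊆ (I : Set (MvPolynomial (Fin m) K)) ∧ Ideal.span G = I ∧
    iniIdeal lt I =
      Ideal.span {p | ∃ g ∈ G, ∃ u, IsLeadMon lt g u ∧ p = MvPolynomial.monomial u (1 : K)}

/-- `G` is the reduced Gröbner basis of `I` w.r.t. `lt`: a Gröbner basis consisting of monic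
polynomials such that no monomial occurring in an element of `G` is divisible by the leading
monomial of another element of `G`. -/
def IsReducedGB {K : Type} [Field K] {m : ℕ} (lt : (Fin m →₀ ℕ) → (Fin m →₀ ℕ) → Prop)
    (I : Ideal (MvPolynomial (Fin m) K)) (G : Set (MvPolynomial (Fin m) K)) : Prop :=
  IsGB lt I G ∧
    (∀ g ∈ G, ∃ u, IsLeadMon lt g u ∧ MvPolynomial.coeff u g = 1) ∧
    (∀ g ∈ G, ∀ u, MvPolynomial.coeff u g ≠ 0 →
      ∀ g' ∈ G, g' ≠ g → ∀ v, IsLeadMon lt g' v → ¬ v ≤ u)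

/-- The homogenization `f^h` of a polynomial `f ∈ K[x_1,…,x_m]` with respect to a new
variable `x₀`, which is the variable of index `Fin.last m` in `K[x_1,…,x_m,x₀]`. -/
noncomputable def homogPoly {K : Type} [Field K] {m : ℕ} (f : MvPolynomial (Fin m) K) :
    MvPolynomial (Fin (m + 1)) K :=
  ∑ u ∈ f.support,
    MvPolynomial.monomial
      (Finsupp.mapDomain Fin.castSucc u +
        Finsupp.single (Fin.last m) (f.totalDegree - degSum u))
      (MvPolynomial.coeff u f)

/-- The homogenization of the ideal `I`, generated by the homogenizations of all its
elements. -/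
noncomputable def homogIdeal {K : Type} [Field K] {m : ℕ} (I : Ideal (MvPolynomial (Fin m) K)) :
    Ideal (MvPolynomial (Fin (m + 1)) K) :=
  Ideal.span (homogPoly '' (I : Set (MvPolynomial (Fin m) K)))

/-- The toric ideal `I(a)`: the kernel of the `K`-algebra map `K[x_1,…,x_m] → K[t]`,
`x_i ↦ t^{a_i}`. -/
noncomputable def toricIdeal (K : Type) [Field K] {m : ℕ} (a : Fin m → ℕ) :
    Ideal (MvPolynomial (Fin m) K) :=
  RingHom.ker (MvPolynomial.aeval (fun i => (Polynomial.X : Polynomial K) ^ a i)).toRingHom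

set_option synthInstance.maxHeartbeats 1000000 in
/-- A homogeneous ideal `I` of a polynomial ring `S` over a field is a Cohen-Macaulay ideal
(equivalently, `S/I` is a Cohen-Macaulay ring) iff there is a regular sequence on `S/I`,
consisting of elements of the irrelevant maximal ideal, whose length equals the Krull
dimension of `S/I`. -/
def IsCMIdeal {K : Type} [Field K] {m : ℕ} (I : Ideal (MvPolynomial (Fin m) K)) : Prop :=
  ∃ rs : List (MvPolynomial (Fin m) K),
    (∀ f ∈ rs, f ∈ Ideal.span (Set.range (MvPolynomial.X : Fin m → MvPolynomial (Fin m) K))) ∧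
    RingTheory.Sequence.IsRegular (MvPolynomial (Fin m) K ⧸ I)
      (rs.map (Ideal.Quotient.mk I)) ∧
    (rs.length : WithBot (WithTop ℕ)) = ringKrullDim (MvPolynomial (Fin m) K ⧸ I)

/-- `u` is (the exponent vector of) a minimal monomial generator of the monomial ideal `J`:
the monomial `x^u` lies in `J` but no proper divisor of it does. -/
def IsMinMonGen {K : Type} [Field K] {m : ℕ} (J : Ideal (MvPolynomial (Fin m) K))
    (u : Fin m →₀ ℕ) : Prop :=
  MvPolynomial.monomial u (1 : K) ∈ J ∧
    ∀ v, v ≤ u → v ≠ u → MvPolynomial.monomial v (1 : K) ∉ J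

/-- The dual sequence `a'` of `a`: `a'_i = a_n - a_i` for `i < n` and `a'_n = a_n`. -/
def dualSeq {m : ℕ} (a : Fin (m + 1) → ℕ) : Fin (m + 1) → ℕ :=
  fun i => if i = Fin.last m then a (Fin.last m) else a (Fin.last m) - a i

/-- The involution `σ(w₁,…,w_n) = (w₁,…,w_{n-1}, -(w₁+⋯+w_n))` of `ℤⁿ`. -/
def sigmaMap (m : ℕ) (w : Fin (m + 1) → ℤ) : Fin (m + 1) → ℤ :=
  fun i => if i = Fin.last m then -(∑ j, w j) else w i

/-- The lattice `L(a) = {w ∈ ℤⁿ : ⟨w, a⟩ = 0}` as a set. -/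
def latticeL {m : ℕ} (a : Fin m → ℕ) : Set (Fin m → ℤ) :=
  {w | ∑ i, w i * (a i : ℤ) = 0}

/-- The binomial `f_w = x^{w⁺} - x^{w⁻}` attached to an integer vector `w`. -/
noncomputable def binom (K : Type) [Field K] {m : ℕ} (w : Fin m → ℤ) :
    MvPolynomial (Fin m) K :=
  MvPolynomial.monomial (Finsupp.equivFunOnFinite.symm fun i => (w i).toNat) (1 : K) -
    MvPolynomial.monomial (Finsupp.equivFunOnFinite.symm fun i => (-w i).toNat) (1 : K)

/-- The numerical semigroup (additive submonoid of `ℕ`) generated by the `a_i`. -/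
def semiH {m : ℕ} (a : Fin m → ℕ) : AddSubmonoid ℕ := AddSubmonoid.closure (Set.range a)

/-- The Apéry set `Ap(H, c) = {x ∈ H : x - c ∉ H}`. -/
def apSet {m : ℕ} (a : Fin m → ℕ) (c : ℕ) : Set ℕ :=
  {x | x ∈ semiH a ∧ ¬ ∃ y ∈ semiH a, x = y + c}

/-- The `a`-degree of a monomial: `deg_a(x^u) = ∑ uᵢ aᵢ`. -/
def degA {m : ℕ} (a : Fin m → ℕ) (u : Fin m →₀ ℕ) : ℕ := ∑ i, u i * a i

/-- `u` is the smallest monomial (w.r.t. `lt`) whose `a`-degree equals `h`. -/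
def IsMinMonOfDeg {m : ℕ} (a : Fin m → ℕ) (lt : (Fin m →₀ ℕ) → (Fin m →₀ ℕ) → Prop)
    (h : ℕ) (u : Fin m →₀ ℕ) : Prop :=
  degA a u = h ∧ ∀ v, degA a v = h → v ≠ u → lt u v

/-- The minimal number of generators of an ideal. -/
noncomputable def muI {R : Type} [CommRing R] (I : Ideal R) : ℕ :=
  sInf {k | ∃ s : Finset R, s.card = k ∧ Ideal.span (s : Set R) = I}

/-- `lt` is a monomial order on the monomials of `K[x_1,…,x_m]`: a linear (strict) order
compatible with multiplication and having `1` as smallest monomial. -/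
structure IsMonOrder {m : ℕ} (lt : (Fin m →₀ ℕ) → (Fin m →₀ ℕ) → Prop) : Prop where
  irrefl : ∀ u, ¬ lt u u
  trans : ∀ u v w, lt u v → lt v w → lt u w
  total : ∀ u v, u ≠ v → lt u v ∨ lt v u
  add_right : ∀ u v w, lt u v → lt (u + w) (v + w)
  zero_lt : ∀ u, u ≠ 0 → lt 0 u


/-!
The toric map `x_i ↦ t^{a_i}` sends `(x_n) + I(a)` into `t^{a_n} K[H]`, so every element of that
ideal has zero `t^h`-coefficient for `h ∈ Ap(H, a_n)`. If `x^u` is the smallest monomial of degree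
`h` and the leading monomial of `f`, then `x^u` is the only monomial of `f` of degree `h`, so the
`t^h`-coefficient of the image of `f` is the leading coefficient: hence `φ_a(h)` is standard.
Conversely, a standard monomial `x^u` has degree in the Apéry set (otherwise `x^u ≡ x_n x^w` modulo
`I(a)`) and is the smallest monomial of its degree (otherwise it leads a binomial of `I(a)`).
-/

section RevLex

variable {m : ℕ} (σ : Equiv.Perm (Fin m))

lemma degSum_add (u v : Fin m →₀ ℕ) : degSum (u + v) = degSum u + degSum v := by
  simp [degSum, Finset.sum_add_distrib]

lemma RevLexLt.asymm {u v : Fin m →₀ ℕ} (huv : RevLexLt σ u v) : ¬ RevLexLt σ v u := by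
  rintro (hvu | ⟨hdeg', k, hk, hk_eq⟩) <;> rcases huv with huv | ⟨hdeg, i, hi, hi_eq⟩
  all_goals try omega
  rcases lt_trichotomy (σ i) (σ k) with h | h | h
  · exact absurd (hi_eq k h) (by omega)
  · obtain rfl : i = k := σ.injective (Fin.ext (by omega))
    omega
  · exact absurd (hk_eq i h) (by omega)

lemma RevLexLt.add_right {u v : Fin m →₀ ℕ} (w : Fin m →₀ ℕ) (huv : RevLexLt σ u v) :
    RevLexLt σ (u + w) (v + w) := by
  rcases huv with huv | ⟨hdeg, i, hi, hi_eq⟩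
  · left
    simp only [degSum_add]
    omega
  · right
    refine ⟨by simp only [degSum_add, hdeg], i, ?_, fun j hj => ?_⟩
    · simp only [Finsupp.add_apply]
      omega
    · simp [hi_eq j hj]

end RevLex

section LeadingMonomials

variable {K : Type} [Field K] {m : ℕ} {lt : (Fin m →₀ ℕ) → (Fin m →₀ ℕ) → Prop}

lemma isLeadMon_monomial (u : Fin m →₀ ℕ) : IsLeadMon lt (monomial u (1 : K)) u := by
  refine ⟨by simp, fun v hv hvu => absurd ?_ hv⟩
  rw [coeff_monomial, if_neg (Ne.symm hvu)]

lemma isLeadMon_monomial_sub_monomial {u v : Fin m →₀ ℕ} (hvu : v ≠ u) (hlt : lt v u) :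
    IsLeadMon lt (monomial u (1 : K) - monomial v 1) u := by
  refine ⟨by simp [coeff_monomial, hvu], fun z hz hzu => ?_⟩
  rw [coeff_sub, coeff_monomial, if_neg (Ne.symm hzu), zero_sub, neg_ne_zero, coeff_monomial,
    ite_ne_right_iff] at hz
  exact hz.1 ▸ hlt

lemma IsLeadMon.mul_monomial (add_right : ∀ u v w, lt u v → lt (u + w) (v + w))
    {f : MvPolynomial (Fin m) K} {v : Fin m →₀ ℕ} (w : Fin m →₀ ℕ) (hf : IsLeadMon lt f v) :
    IsLeadMon lt (f * monomial w 1) (v + w) := by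
  refine ⟨by simpa [coeff_mul_monomial] using hf.1, fun z hz hz_ne => ?_⟩
  rw [coeff_mul_monomial'] at hz
  split_ifs at hz with hwz
  · rw [mul_one] at hz
    have hne : z - w ≠ v := fun h => hz_ne (by rw [← h, tsub_add_cancel_of_le hwz])
    simpa [tsub_add_cancel_of_le hwz] using add_right _ _ w (hf.2 _ hz hne)
  · exact absurd rfl hz

lemma iniIdeal_mono {I J : Ideal (MvPolynomial (Fin m) K)} (hIJ : I ≤ J) :
    iniIdeal lt I ≤ iniIdeal lt J :=
  Ideal.span_mono fun _ ⟨f, hf, u, hu, hp⟩ => ⟨f, hIJ hf, u, hu, hp⟩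

lemma iniIdeal_eq_span_monomial_image (I : Ideal (MvPolynomial (Fin m) K)) :
    iniIdeal lt I =
      Ideal.span ((fun u => monomial u (1 : K)) '' {u | ∃ f ∈ I, IsLeadMon lt f u}) := by
  rw [iniIdeal]
  congr 1
  ext p
  constructor
  · rintro ⟨f, hf, u, hu, rfl⟩
    exact ⟨u, ⟨f, hf, hu⟩, rfl⟩
  · rintro ⟨u, ⟨f, hf, hu⟩, rfl⟩
    exact ⟨f, hf, u, hu, rfl⟩

/-- `x^u` is divisible by a leading monomial `x^v` of some `f ∈ I`, and `x^{u-v} f` then has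
leading monomial `x^u`. -/
lemma monomial_mem_iniIdeal_iff (add_right : ∀ u v w, lt u v → lt (u + w) (v + w))
    {I : Ideal (MvPolynomial (Fin m) K)} {u : Fin m →₀ ℕ} :
    monomial u (1 : K) ∈ iniIdeal lt I ↔ ∃ f ∈ I, IsLeadMon lt f u := by
  refine ⟨fun hu => ?_, fun ⟨f, hf, hu⟩ => Ideal.subset_span ⟨f, hf, u, hu, rfl⟩⟩
  rw [iniIdeal_eq_span_monomial_image, mem_ideal_span_monomial_image] at hu
  obtain ⟨v, ⟨f, hf, hv⟩, hvu⟩ := hu u (by simp)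
  refine ⟨f * monomial (u - v) 1, Ideal.mul_mem_right _ _ hf, ?_⟩
  simpa [add_tsub_cancel_of_le hvu] using hv.mul_monomial add_right (u - v)

end LeadingMonomials

noncomputable def toricEval (K : Type) [Field K] {m : ℕ} (a : Fin m → ℕ) :
    MvPolynomial (Fin m) K →ₐ[K] Polynomial K :=
  aeval fun i => Polynomial.X ^ a i

section Toric

variable {K : Type} [Field K] {m : ℕ} (a : Fin m → ℕ) {lt : (Fin m →₀ ℕ) → (Fin m →₀ ℕ) → Prop}

lemma degA_add (u v : Fin m →₀ ℕ) : degA a (u + v) = degA a u + degA a v := by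
  simp [degA, add_mul, Finset.sum_add_distrib]

lemma degA_single (i : Fin m) (k : ℕ) : degA a (Finsupp.single i k) = k * a i := by
  simp [degA, Finsupp.single_apply]

lemma degA_mem_semiH (u : Fin m →₀ ℕ) : degA a u ∈ semiH a :=
  AddSubmonoid.sum_mem _ fun i _ => smul_eq_mul (u i) (a i) ▸
    (semiH a).nsmul_mem (AddSubmonoid.subset_closure (Set.mem_range_self i)) (u i)

lemma exists_degA_eq_of_mem_semiH {y : ℕ} (hy : y ∈ semiH a) :
    ∃ w : Fin m →₀ ℕ, degA a w = y := by
  induction hy using AddSubmonoid.closure_induction with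
  | mem x hx =>
    obtain ⟨i, rfl⟩ := hx
    exact ⟨Finsupp.single i 1, by simp [degA_single]⟩
  | zero => exact ⟨0, by simp [degA]⟩
  | add x y _ _ hx hy =>
    obtain ⟨w₁, rfl⟩ := hx
    obtain ⟨w₂, rfl⟩ := hy
    exact ⟨w₁ + w₂, degA_add a w₁ w₂⟩

lemma mem_toricIdeal_iff {f : MvPolynomial (Fin m) K} :
    f ∈ toricIdeal K a ↔ toricEval K a f = 0 :=
  Iff.rfl

lemma toricEval_X (i : Fin m) : toricEval K a (X i) = Polynomial.X ^ a i :=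
  aeval_X _ i

lemma toricEval_monomial (u : Fin m →₀ ℕ) (c : K) :
    toricEval K a (monomial u c) = Polynomial.C c * Polynomial.X ^ degA a u := by
  rw [toricEval, aeval_monomial, Polynomial.algebraMap_eq, Finsupp.prod_fintype _ _ (by simp)]
  simp only [← pow_mul, Finset.prod_pow_eq_pow_sum, degA, mul_comm]

lemma coeff_toricEval (f : MvPolynomial (Fin m) K) (e : ℕ) :
    (toricEval K a f).coeff e = ∑ w ∈ f.support with degA a w = e, coeff w f := by
  conv_lhs => rw [f.as_sum]
  rw [map_sum, Polynomial.finsetSum_coeff, Finset.sum_filter]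
  refine Finset.sum_congr rfl fun w _ => ?_
  simp [toricEval_monomial, Polynomial.coeff_X_pow, eq_comm]

lemma coeff_toricEval_degA_of_unique {f : MvPolynomial (Fin m) K} {u : Fin m →₀ ℕ}
    (hu : ∀ z, coeff z f ≠ 0 → degA a z = degA a u → z = u) :
    (toricEval K a f).coeff (degA a u) = coeff u f := by
  rw [coeff_toricEval]
  refine Finset.sum_eq_single u (fun z hz hzu => ?_) (fun hu' => ?_)
  · rw [Finset.mem_filter, mem_support_iff] at hz
    exact absurd (hu z hz.1 hz.2) hzu
  · simpa using hu'

lemma mem_semiH_of_coeff_toricEval_ne_zero {f : MvPolynomial (Fin m) K} {e : ℕ}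
    (he : (toricEval K a f).coeff e ≠ 0) : e ∈ semiH a := by
  rw [coeff_toricEval] at he
  obtain ⟨w, hw, -⟩ := Finset.exists_ne_zero_of_sum_ne_zero he
  exact (Finset.mem_filter.mp hw).2 ▸ degA_mem_semiH a w

lemma monomial_sub_monomial_mem_toricIdeal {u v : Fin m →₀ ℕ} (h : degA a u = degA a v) :
    monomial u (1 : K) - monomial v 1 ∈ toricIdeal K a := by
  rw [mem_toricIdeal_iff, map_sub, toricEval_monomial, toricEval_monomial, h, sub_self]

lemma monomial_mem_iniIdeal_toricIdeal_of_lt {u v : Fin m →₀ ℕ}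
    (hdeg : degA a v = degA a u) (hvu : v ≠ u) (hlt : lt v u) :
    monomial u (1 : K) ∈ iniIdeal lt (toricIdeal K a) :=
  Ideal.subset_span ⟨_, monomial_sub_monomial_mem_toricIdeal a hdeg.symm, u,
    isLeadMon_monomial_sub_monomial hvu hlt, rfl⟩

variable (i : Fin m)

lemma exists_add_eq_of_coeff_toricEval_ne_zero {f : MvPolynomial (Fin m) K}
    (hf : f ∈ Ideal.span {X i} ⊔ toricIdeal K a) {e : ℕ} (he : (toricEval K a f).coeff e ≠ 0) :
    ∃ y ∈ semiH a, e = y + a i := by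
  obtain ⟨q, hq, r, hr, rfl⟩ := Submodule.mem_sup.mp hf
  obtain ⟨g, rfl⟩ := Ideal.mem_span_singleton.mp hq
  rw [map_add, (mem_toricIdeal_iff a).mp hr, add_zero, map_mul, toricEval_X,
    Polynomial.coeff_X_pow_mul'] at he
  split_ifs at he with hle
  · exact ⟨e - a i, mem_semiH_of_coeff_toricEval_ne_zero a he, by omega⟩
  · exact absurd rfl he

lemma degA_mem_apSet_of_monomial_notMem_iniIdeal {u : Fin m →₀ ℕ}
    (hu : monomial u (1 : K) ∉ iniIdeal lt (Ideal.span {X i} ⊔ toricIdeal K a)) :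
    degA a u ∈ apSet a (a i) := by
  refine ⟨degA_mem_semiH a u, fun ⟨y, hy, hdeg⟩ => hu ?_⟩
  obtain ⟨w, rfl⟩ := exists_degA_eq_of_mem_semiH a hy
  have hbinom : monomial u (1 : K) - monomial (w + Finsupp.single i 1) 1 ∈ toricIdeal K a :=
    monomial_sub_monomial_mem_toricIdeal a (by rw [degA_add, degA_single, hdeg, one_mul])
  have hXi : monomial (w + Finsupp.single i 1) (1 : K) ∈ Ideal.span {X i} :=
    Ideal.mem_span_singleton.mpr ⟨monomial w 1, by rw [X, monomial_mul, one_mul, add_comm]⟩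
  have hmem := add_mem (Ideal.mem_sup_right hbinom) (Ideal.mem_sup_left hXi)
  rw [sub_add_cancel] at hmem
  exact Ideal.subset_span ⟨_, hmem, u, isLeadMon_monomial u, rfl⟩

lemma monomial_notMem_iniIdeal_of_isMinMonOfDeg
    (asymm : ∀ u v, lt u v → ¬ lt v u) (add_right : ∀ u v w, lt u v → lt (u + w) (v + w))
    {h : ℕ} {u : Fin m →₀ ℕ} (hh : h ∈ apSet a (a i)) (hu : IsMinMonOfDeg a lt h u) :
    monomial u (1 : K) ∉ iniIdeal lt (Ideal.span {X i} ⊔ toricIdeal K a) := by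
  obtain ⟨rfl, hmin⟩ := hu
  rw [monomial_mem_iniIdeal_iff add_right]
  rintro ⟨f, hf, hlead⟩
  have hcoeff : (toricEval K a f).coeff (degA a u) ≠ 0 := by
    rw [coeff_toricEval_degA_of_unique a fun z hz hdeg => by_contra fun hzu =>
      asymm _ _ (hlead.2 z hz hzu) (hmin z hdeg hzu)]
    exact hlead.1
  exact hh.2 (exists_add_eq_of_coeff_toricEval_ne_zero a i hf hcoeff)

end Toric

theorem stmt11_general {K : Type} [Field K] {n : ℕ}
    (a : Fin (n + 1) → ℕ)
    (σ : Equiv.Perm (Fin (n + 1)))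
    (φ : ℕ → (Fin (n + 1) →₀ ℕ))
    (hφ : ∀ h ∈ apSet a (a (Fin.last n)), IsMinMonOfDeg a (RevLexLt σ) h (φ h)) :
    Set.BijOn φ (apSet a (a (Fin.last n)))
      {u : Fin (n + 1) →₀ ℕ |
        MvPolynomial.monomial u (1 : K) ∉
          iniIdeal (RevLexLt σ)
            (Ideal.span {(MvPolynomial.X (Fin.last n) : MvPolynomial (Fin (n + 1)) K)} ⊔
              toricIdeal K a)} := by
  refine ⟨fun h hh => ?_, fun h₁ h₁_mem h₂ h₂_mem heq => ?_, fun u hu => ?_⟩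
  · exact monomial_notMem_iniIdeal_of_isMinMonOfDeg a _ (fun _ _ => RevLexLt.asymm σ)
      (fun _ _ w => RevLexLt.add_right σ w) hh (hφ h hh)
  · rw [← (hφ h₁ h₁_mem).1, ← (hφ h₂ h₂_mem).1, heq]
  · have hap := degA_mem_apSet_of_monomial_notMem_iniIdeal a _ hu
    obtain ⟨hdeg, hmin⟩ := hφ _ hap
    refine ⟨degA a u, hap, by_contra fun hne => hu ?_⟩
    exact iniIdeal_mono le_sup_right
      (monomial_mem_iniIdeal_toricIdeal_of_lt a hdeg hne (hmin u rfl (Ne.symm hne)))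

/-- The assignment `h ↦ φ_a(h)` is a bijection from `Ap(H, a_n)` onto the set of monomials
not lying in `ini_<((x_n) + I(a))`. -/
theorem stmt11 {K : Type} [Field K] {n : ℕ}
    (a : Fin (n + 1) → ℕ) (ha_inj : Function.Injective a) (ha_pos : ∀ i, 0 < a i)
    (ha_gcd : Finset.univ.gcd a = 1)
    (ha_lt : ∀ i, i ≠ Fin.last n → a i < a (Fin.last n))
    (σ : Equiv.Perm (Fin (n + 1))) (hσ : σ (Fin.last n) = Fin.last n)
    (φ : ℕ → (Fin (n + 1) →₀ ℕ))
    (hφ : ∀ h ∈ apSet a (a (Fin.last n)), IsMinMonOfDeg a (RevLexLt σ) h (φ h)) :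
    Set.BijOn φ (apSet a (a (Fin.last n)))
      {u : Fin (n + 1) →₀ ℕ |
        MvPolynomial.monomial u (1 : K) ∉
          iniIdeal (RevLexLt σ)
            (Ideal.span {(MvPolynomial.X (Fin.last n) : MvPolynomial (Fin (n + 1)) K)} ⊔
              toricIdeal K a)} :=
  stmt11_general a σ φ hφ
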